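/- Let x̃ : Ω → ℝ^m and z : Ω → ℝ^n be random vectors on a probability space (Ω, μ) whose coordinate functions are measurable and square-integrable, and let B ∈ ℝ^{m×r} be a fixed matrix. Let B⁺ be a Moore–Penrose pseudoinverse of B, E_{zz}⁺ a Moore–Penrose pseudoinverse of E_{zz}, R = (E_{zz})^{1/2} the positive semidefinite square root of E_{zz}, and R⁺ a Moore–Penrose pseudoinverse of R. Set Ŝ = B⁺ E_{x̃z} E_{zz}⁺. Then the minimal error is ∫_Ω ‖x̃(ω) − B Ŝ z(ω)‖₂² dμ(ω) = tr(E_{x̃x̃}) − ‖E_{x̃z} R⁺‖_F² + ‖(I_m − B B⁺) E_{x̃z} R⁺‖_F². -/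

import Mathlib

open MeasureTheory Matrix
open scoped ENNReal

/-- Second-moment matrix `E_{uv}` of two random vectors. -/
noncomputable def secondMoment {Ω : Type*} [MeasurableSpace Ω] (μ : Measure Ω)
    {a b : ℕ} (u : Ω → Fin a → ℝ) (v : Ω → Fin b → ℝ) : Matrix (Fin a) (Fin b) ℝ :=
  Matrix.of fun i j => ∫ ω, u ω i * v ω j ∂μ

/-- Mean square error `∫ ‖x(ω) − P z(ω)‖₂² dμ`. -/
noncomputable def mse {Ω : Type*} [MeasurableSpace Ω] (μ : Measure Ω)
    {m n : ℕ} (x : Ω → Fin m → ℝ) (z : Ω → Fin n → ℝ)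
    (P : Matrix (Fin m) (Fin n) ℝ) : ℝ :=
  ∫ ω, ∑ i, (x ω i - P.mulVec (z ω) i) ^ 2 ∂μ

/-- Squared Frobenius norm `‖A‖_F² = tr (A Aᵀ)`. -/
noncomputable def frobSq {a b : ℕ} (A : Matrix (Fin a) (Fin b) ℝ) : ℝ :=
  (A * Aᵀ).trace

/-- `B` is a Moore–Penrose pseudoinverse of `A`. -/
def IsMoorePenrose {a b : ℕ} (A : Matrix (Fin a) (Fin b) ℝ)
    (B : Matrix (Fin b) (Fin a) ℝ) : Prop :=
  A * B * A = A ∧ B * A * B = B ∧ (A * B)ᵀ = A * B ∧ (B * A)ᵀ = B * A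

/-! ### Auxiliary lemmas -/

lemma integrable_mul_L2 {Ω : Type*} [MeasurableSpace Ω] {μ : Measure Ω} {f g : Ω → ℝ}
    (hf : MemLp f 2 μ) (hg : MemLp g 2 μ) : Integrable (fun ω => f ω * g ω) μ := by
  have hpqr : (1 : ℝ≥0∞)/1 = 1/2 + 1/2 := by
    rw [ENNReal.div_add_div_same]; norm_num [ENNReal.div_self]
  have := hg.smul (r := 1) hf (hpqr := ⟨by rw [inv_one, ENNReal.inv_two_add_inv_two]⟩)
  rw [memLp_one_iff_integrable] at this
  exact this

lemma mp_unique {a b : ℕ} {A : Matrix (Fin a) (Fin b) ℝ} {X Y : Matrix (Fin b) (Fin a) ℝ}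
    (hX : IsMoorePenrose A X) (hY : IsMoorePenrose A Y) : X = Y := by
  obtain ⟨hX1, hX2, hX3, hX4⟩ := hX
  obtain ⟨hY1, hY2, hY3, hY4⟩ := hY
  have hAX : A * X = A * Y := by
    calc A * X = (A * X)ᵀ := hX3.symm
    _ = ((A * Y) * (A * X))ᵀ := by
        rw [show (A * Y) * (A * X) = (A * Y * A) * X by simp only [Matrix.mul_assoc], hY1]
    _ = (A * X)ᵀ * (A * Y)ᵀ := by rw [transpose_mul]
    _ = (A * X) * (A * Y) := by rw [hX3, hY3]
    _ = A * Y := by rw [show (A * X) * (A * Y) = (A * X * A) * Y by simp only [Matrix.mul_assoc], hX1]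
  have hXA : X * A = Y * A := by
    calc X * A = (X * A)ᵀ := hX4.symm
    _ = ((X * A) * (Y * A))ᵀ := by
        rw [show (X * A) * (Y * A) = X * (A * Y * A) by simp only [Matrix.mul_assoc], hY1]
    _ = (Y * A)ᵀ * (X * A)ᵀ := by rw [transpose_mul]
    _ = (Y * A) * (X * A) := by rw [hX4, hY4]
    _ = Y * A := by rw [show (Y * A) * (X * A) = Y * (A * X * A) by simp only [Matrix.mul_assoc], hX1]
  calc X = X * A * X := hX2.symm
  _ = X * (A * Y) := by rw [Matrix.mul_assoc, hAX]
  _ = (Y * A) * Y := by rw [← Matrix.mul_assoc, hXA]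
  _ = Y := hY2

lemma mp_transpose {a b : ℕ} {A : Matrix (Fin a) (Fin b) ℝ} {X : Matrix (Fin b) (Fin a) ℝ}
    (hX : IsMoorePenrose A X) : IsMoorePenrose Aᵀ Xᵀ := by
  obtain ⟨h1, h2, h3, h4⟩ := hX
  have e1 : Aᵀ * Xᵀ = (X * A)ᵀ := (transpose_mul X A).symm
  have e2 : Xᵀ * Aᵀ = (A * X)ᵀ := (transpose_mul A X).symm
  refine ⟨?_, ?_, ?_, ?_⟩
  · calc Aᵀ * Xᵀ * Aᵀ = (A * (X * A))ᵀ := by rw [transpose_mul, transpose_mul]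
    _ = Aᵀ := by rw [← Matrix.mul_assoc, h1]
  · calc Xᵀ * Aᵀ * Xᵀ = (X * (A * X))ᵀ := by rw [transpose_mul, transpose_mul]
    _ = Xᵀ := by rw [← Matrix.mul_assoc, h2]
  · rw [e1, transpose_transpose]; exact h4.symm
  · rw [e2, transpose_transpose]; exact h3.symm

lemma mp_symm_transpose {c : ℕ} {R Rp : Matrix (Fin c) (Fin c) ℝ}
    (hRsymm : Rᵀ = R) (hRp : IsMoorePenrose R Rp) : Rpᵀ = Rp :=
  mp_unique (hRsymm ▸ mp_transpose hRp) hRp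

lemma mp_sq {c : ℕ} {R Rp : Matrix (Fin c) (Fin c) ℝ}
    (hRsymm : Rᵀ = R) (hRp : IsMoorePenrose R Rp) :
    IsMoorePenrose (R * R) (Rp * Rp) := by
  obtain ⟨h1, h2, h3, h4⟩ := hRp
  have hRpt : Rpᵀ = Rp := mp_symm_transpose hRsymm ⟨h1, h2, h3, h4⟩
  have hcomm : R * Rp = Rp * R := by
    calc R * Rp = (R * Rp)ᵀ := h3.symm
    _ = Rpᵀ * Rᵀ := transpose_mul R Rp
    _ = Rp * R := by rw [hRpt, hRsymm]
  have hRpRR : Rp * R * R = R := by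
    rw [show Rp * R * R = (Rp * R) * R from rfl, ← hcomm, h1]
  have hRRpRp : R * Rp * Rp = Rp := by
    rw [show R * Rp * Rp = (R * Rp) * Rp from rfl, hcomm, h2]
  have hprod : (R * R) * (Rp * Rp) = R * Rp := by
    calc (R * R) * (Rp * Rp) = R * (R * Rp * Rp) := by simp only [Matrix.mul_assoc]
    _ = R * Rp := by rw [hRRpRp]
  have hprod' : (Rp * Rp) * (R * R) = Rp * R := by
    calc (Rp * Rp) * (R * R) = Rp * (Rp * R * R) := by simp only [Matrix.mul_assoc]
    _ = Rp * R := by rw [hRpRR]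
  refine ⟨?_, ?_, ?_, ?_⟩
  · calc (R * R) * (Rp * Rp) * (R * R) = (R * Rp) * (R * R) := by rw [hprod]
    _ = (R * Rp * R) * R := by simp only [Matrix.mul_assoc]
    _ = R * R := by rw [h1]
  · calc (Rp * Rp) * (R * R) * (Rp * Rp) = (Rp * R) * (Rp * Rp) := by rw [hprod']
    _ = (Rp * R * Rp) * Rp := by simp only [Matrix.mul_assoc]
    _ = Rp * Rp := by rw [h2]
  · rw [hprod]; exact h3
  · rw [hprod']; exact h4

lemma mse_eq {Ω : Type*} [MeasurableSpace Ω] (μ : Measure Ω) {m n : ℕ}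
    (x : Ω → Fin m → ℝ) (z : Ω → Fin n → ℝ)
    (hxL : ∀ i, MemLp (fun ω => x ω i) 2 μ) (hzL : ∀ j, MemLp (fun ω => z ω j) 2 μ)
    (P : Matrix (Fin m) (Fin n) ℝ) :
    mse μ x z P = (secondMoment μ x x).trace
      - 2 * (secondMoment μ x z * Pᵀ).trace
      + (P * secondMoment μ z z * Pᵀ).trace := by
  have hxx : ∀ i, Integrable (fun ω => x ω i * x ω i) μ :=
    fun i => integrable_mul_L2 (hxL i) (hxL i)
  have hxz : ∀ i j, Integrable (fun ω => x ω i * z ω j) μ :=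
    fun i j => integrable_mul_L2 (hxL i) (hzL j)
  have hzz : ∀ j k, Integrable (fun ω => z ω j * z ω k) μ :=
    fun j k => integrable_mul_L2 (hzL j) (hzL k)
  have hF2i : ∀ i, Integrable (fun ω => ∑ j, P i j * (x ω i * z ω j)) μ :=
    fun i => integrable_finset_sum _ (fun j _ => (hxz i j).const_mul _)
  have hF3ij : ∀ i j, Integrable (fun ω => ∑ k, P i j * P i k * (z ω j * z ω k)) μ :=
    fun i j => integrable_finset_sum _ (fun k _ => (hzz j k).const_mul _)
  have hF3i : ∀ i, Integrable (fun ω => ∑ j, ∑ k, P i j * P i k * (z ω j * z ω k)) μ :=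
    fun i => integrable_finset_sum _ (fun j _ => hF3ij i j)
  have hF1 : Integrable (fun ω => ∑ i, x ω i * x ω i) μ :=
    integrable_finset_sum _ (fun i _ => hxx i)
  have hF2 : Integrable (fun ω => ∑ i, ∑ j, P i j * (x ω i * z ω j)) μ :=
    integrable_finset_sum _ (fun i _ => hF2i i)
  have hF3 : Integrable (fun ω => ∑ i, ∑ j, ∑ k, P i j * P i k * (z ω j * z ω k)) μ :=
    integrable_finset_sum _ (fun i _ => hF3i i)
  have key : ∀ ω, ∑ i, (x ω i - P.mulVec (z ω) i) ^ 2
      = (∑ i, x ω i * x ω i) - 2 * (∑ i, ∑ j, P i j * (x ω i * z ω j))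
        + (∑ i, ∑ j, ∑ k, P i j * P i k * (z ω j * z ω k)) := by
    intro ω
    have hi : ∀ i ∈ Finset.univ, (x ω i - P.mulVec (z ω) i) ^ 2
        = x ω i * x ω i - 2 * (∑ j, P i j * (x ω i * z ω j))
          + (∑ j, ∑ k, P i j * P i k * (z ω j * z ω k)) := by
      intro i _
      have hmv : P.mulVec (z ω) i = ∑ j, P i j * z ω j := by
        simp [Matrix.mulVec, dotProduct]
      rw [hmv]
      have e1 : x ω i * (∑ j, P i j * z ω j) = ∑ j, P i j * (x ω i * z ω j) := by
        rw [Finset.mul_sum]; exact Finset.sum_congr rfl fun j _ => by ring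
      have e2 : (∑ j, P i j * z ω j) * (∑ k, P i k * z ω k)
          = ∑ j, ∑ k, P i j * P i k * (z ω j * z ω k) := by
        rw [Finset.sum_mul_sum]
        exact Finset.sum_congr rfl fun j _ => Finset.sum_congr rfl fun k _ => by ring
      calc (x ω i - ∑ j, P i j * z ω j) ^ 2
          = x ω i * x ω i - 2 * (x ω i * ∑ j, P i j * z ω j)
            + (∑ j, P i j * z ω j) * (∑ k, P i k * z ω k) := by ring
      _ = _ := by rw [e1, e2]
    rw [Finset.sum_congr rfl hi, Finset.sum_add_distrib, Finset.sum_sub_distrib,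
      ← Finset.mul_sum]
  have hI1 : (∫ ω, ∑ i, x ω i * x ω i ∂μ) = (secondMoment μ x x).trace := by
    rw [integral_finset_sum _ (fun i _ => hxx i)]
    simp [Matrix.trace, Matrix.diag, secondMoment]
  have hI2 : (∫ ω, ∑ i, ∑ j, P i j * (x ω i * z ω j) ∂μ)
      = (secondMoment μ x z * Pᵀ).trace := by
    rw [integral_finset_sum _ (fun i _ => hF2i i)]
    simp only [Matrix.trace, Matrix.diag, Matrix.mul_apply, Matrix.transpose_apply,
      secondMoment, Matrix.of_apply]
    refine Finset.sum_congr rfl fun i _ => ?_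
    rw [integral_finset_sum _ (fun j _ => (hxz i j).const_mul _)]
    refine Finset.sum_congr rfl fun j _ => ?_
    rw [integral_const_mul]; ring
  have hI3 : (∫ ω, ∑ i, ∑ j, ∑ k, P i j * P i k * (z ω j * z ω k) ∂μ)
      = (P * secondMoment μ z z * Pᵀ).trace := by
    rw [integral_finset_sum _ (fun i _ => hF3i i)]
    simp only [Matrix.trace, Matrix.diag, Matrix.mul_apply, Matrix.transpose_apply,
      secondMoment, Matrix.of_apply]
    refine Finset.sum_congr rfl fun i _ => ?_
    rw [integral_finset_sum _ (fun j _ => hF3ij i j)]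
    have expand : ∀ j : Fin n, (∫ ω, ∑ k, P i j * P i k * (z ω j * z ω k) ∂μ)
        = ∑ k, P i j * P i k * ∫ ω, z ω j * z ω k ∂μ := by
      intro j
      rw [integral_finset_sum _ (fun k _ => (hzz j k).const_mul _)]
      exact Finset.sum_congr rfl fun k _ => integral_const_mul _ _
    simp only [expand]
    rw [Finset.sum_comm]
    refine Finset.sum_congr rfl fun k _ => ?_
    rw [Finset.sum_mul]
    exact Finset.sum_congr rfl fun j _ => by ring
  unfold mse
  rw [integral_congr_ae (Filter.Eventually.of_forall key)]
  have hsub : Integrable (fun ω => (∑ i, x ω i * x ω i)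
      - 2 * (∑ i, ∑ j, P i j * (x ω i * z ω j))) μ := hF1.sub (hF2.const_mul 2)
  rw [integral_add hsub hF3]
  rw [integral_sub hF1 (hF2.const_mul 2), integral_const_mul, hI1, hI2, hI3]

theorem minimal_error_intermediate_matrix {Ω : Type*} [MeasurableSpace Ω]
    (μ : Measure Ω) [IsProbabilityMeasure μ] {m n r : ℕ}
    (xt : Ω → Fin m → ℝ) (z : Ω → Fin n → ℝ)
    (hxm : ∀ i, Measurable fun ω => xt ω i) (hxL : ∀ i, MemLp (fun ω => xt ω i) 2 μ)
    (hzm : ∀ j, Measurable fun ω => z ω j) (hzL : ∀ j, MemLp (fun ω => z ω j) 2 μ)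
    (B : Matrix (Fin m) (Fin r) ℝ)
    (Bp : Matrix (Fin r) (Fin m) ℝ) (hBp : IsMoorePenrose B Bp)
    (Ezzp : Matrix (Fin n) (Fin n) ℝ) (hEzzp : IsMoorePenrose (secondMoment μ z z) Ezzp)
    (R : Matrix (Fin n) (Fin n) ℝ) (hRpsd : R.PosSemidef)
    (hRsq : R * R = secondMoment μ z z)
    (Rp : Matrix (Fin n) (Fin n) ℝ) (hRp : IsMoorePenrose R Rp) :
    mse μ xt z (B * (Bp * secondMoment μ xt z * Ezzp)) =
      (secondMoment μ xt xt).trace - frobSq (secondMoment μ xt z * Rp)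
        + frobSq ((1 - B * Bp) * secondMoment μ xt z * Rp) := by
  set N := secondMoment μ xt z with hN
  set C := secondMoment μ z z with hC
  set H := B * Bp with hHdef
  have hRsymm : Rᵀ = R := by
    have := hRpsd.1
    rwa [Matrix.IsHermitian, conjTranspose_eq_transpose_of_trivial] at this
  have hCp : Ezzp = Rp * Rp := mp_unique hEzzp (hRsq ▸ mp_sq hRsymm hRp)
  have hRpt : Rpᵀ = Rp := mp_symm_transpose hRsymm hRp
  have hCpt : Ezzpᵀ = Ezzp := by rw [hCp, transpose_mul, hRpt]
  have hH : Hᵀ = H := hBp.2.2.1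
  have hH2 : H * H = H := by
    rw [show H * H = (B * Bp * B) * Bp by simp only [hHdef, Matrix.mul_assoc], hBp.1]
  have hBpt : Bpᵀ * Bᵀ = H := by rw [← transpose_mul]; exact hBp.2.2.1
  set P := B * (Bp * N * Ezzp) with hP
  have hPt : Pᵀ = Ezzp * (Nᵀ * H) := by
    rw [hP, transpose_mul, transpose_mul, transpose_mul, hCpt]
    simp only [Matrix.mul_assoc, hBpt]
  set M := N * (Ezzp * Nᵀ) with hM
  have t1 : (N * Pᵀ).trace = (H * M).trace := by
    rw [hPt, show N * (Ezzp * (Nᵀ * H)) = M * H by simp only [hM, Matrix.mul_assoc],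
      Matrix.trace_mul_comm]
  have t2 : (P * C * Pᵀ).trace = (H * M).trace := by
    have e : P * C * Pᵀ = (H * M) * H := by
      rw [hPt, hP]
      rw [show B * (Bp * N * Ezzp) * C * (Ezzp * (Nᵀ * H))
          = (B * Bp) * (N * ((Ezzp * C * Ezzp) * (Nᵀ * H))) by
        simp only [Matrix.mul_assoc], hEzzp.2.1]
      simp only [hHdef, hM, Matrix.mul_assoc]
    rw [e, Matrix.trace_mul_comm, show H * (H * M) = (H * H) * M by
      simp only [Matrix.mul_assoc], hH2]
  have t3 : frobSq (N * Rp) = M.trace := by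
    rw [frobSq, transpose_mul, hRpt,
      show N * Rp * (Rp * Nᵀ) = N * ((Rp * Rp) * Nᵀ) by simp only [Matrix.mul_assoc],
      ← hCp, hM]
  have t4 : frobSq ((1 - H) * N * Rp) = M.trace - (H * M).trace := by
    have hGt : (1 - H)ᵀ = 1 - H := by rw [transpose_sub, transpose_one, hH]
    have hG2 : (1 - H) * (1 - H) = 1 - H := by
      have : (1 - H) * (1 - H) = 1 - H - H + H * H := by noncomm_ring
      rw [this, hH2]; abel
    have e : (1 - H) * N * Rp * ((1 - H) * N * Rp)ᵀ = ((1 - H) * M) * (1 - H) := by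
      rw [transpose_mul, transpose_mul, hRpt, hGt]
      rw [show (1 - H) * N * Rp * (Rp * (Nᵀ * (1 - H)))
          = (1 - H) * (N * ((Rp * Rp) * Nᵀ)) * (1 - H) by simp only [Matrix.mul_assoc],
        ← hCp, hM]
    rw [frobSq, e, Matrix.trace_mul_comm, show (1 - H) * ((1 - H) * M)
        = ((1 - H) * (1 - H)) * M by simp only [Matrix.mul_assoc], hG2,
      Matrix.sub_mul, Matrix.one_mul, Matrix.trace_sub]
  rw [mse_eq μ xt z hxL hzL P, t1, t2, t3, t4]
  ring
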